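/- Consider smooth functions x, y, z, θ : ℝ → ℝ satisfying x(t)² + y(t)² + z(t)² = 1 for all t and the ODE system x′ = −2y/(1+z²), y′ = 2x/(1+z²), z′ = 0, θ′ = 2z/(1+z²). (1) If T > 0 is such that x(T) = x(0), y(T) = y(0), z(T) = z(0) and θ(T) − θ(0) ∈ 2πℤ (i.e. the solution descends to a closed orbit of period T on S² × S¹ = S² × (ℝ/2πℤ)), then T ≥ π. (2) For every θ₀ ∈ ℝ, the curve t ↦ (cos 2t, sin 2t, 0, θ₀) is a solution that closes up with period exactly π. Hence the minimal period of closed orbits of this system is π. -/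

import Mathlib

/-
The height z is a first integral, and at height c the flow rotates (x, y) rigidly with angular
speed ν = 2/(1 + c²) while θ advances at the constant speed cν. Away from the poles a closed orbit
must therefore complete a whole number of turns, so νT ∈ 2πℤ_{>0} and T ≥ π(1 + c²) ≥ π. At the
poles (c = ±1, ν = 1) only θ moves, at unit speed, and closing up in S¹ forces T ∈ 2πℤ_{>0}.
-/

noncomputable section

open scoped ContDiff

open Real

lemma sub_eq_mul_of_hasDerivAt_const {f : ℝ → ℝ} {a : ℝ} (hf : ∀ t, HasDerivAt f a t) (t : ℝ) :
    f t - f 0 = a * t := by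
  have hg : ∀ s, HasDerivAt (fun s => f s - a * s) 0 s := fun s =>
    ((hf s).fun_sub ((hasDerivAt_id' s).const_mul a)).congr_deriv (by ring)
  have := is_const_of_deriv_eq_zero (fun s => (hg s).differentiableAt) (fun s => (hg s).deriv) t 0
  simp only [mul_zero, sub_zero] at this
  linarith

lemma two_pi_le_of_eq_two_pi_mul_int {s : ℝ} (hs : 0 < s) {k : ℤ} (hk : s = 2 * π * k) :
    2 * π ≤ s := by
  have hk_pos : (0 : ℝ) < k := pos_of_mul_pos_right (hk ▸ hs) (by positivity)
  have hk_one : (1 : ℝ) ≤ k := by exact_mod_cast (show (0 : ℤ) < k by exact_mod_cast hk_pos)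
  rw [hk]
  nlinarith [pi_pos]

lemma hasDerivAt_cos_const_mul (ν t : ℝ) :
    HasDerivAt (fun s => cos (ν * s)) (-ν * sin (ν * t)) t :=
  ((hasDerivAt_id' t).const_mul ν).cos.congr_deriv (by ring)

lemma hasDerivAt_sin_const_mul (ν t : ℝ) :
    HasDerivAt (fun s => sin (ν * s)) (ν * cos (ν * t)) t :=
  ((hasDerivAt_id' t).const_mul ν).sin.congr_deriv (by ring)

section Rotation

variable {ν : ℝ} {x y : ℝ → ℝ}

lemma rotate_back_eq_initial (hx : ∀ t, HasDerivAt x (-ν * y t) t)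
    (hy : ∀ t, HasDerivAt y (ν * x t) t) (t : ℝ) :
    x t * cos (ν * t) + y t * sin (ν * t) = x 0 ∧
      -x t * sin (ν * t) + y t * cos (ν * t) = y 0 := by
  have hu : ∀ s, HasDerivAt (fun s => x s * cos (ν * s) + y s * sin (ν * s)) 0 s := fun s =>
    (((hx s).fun_mul (hasDerivAt_cos_const_mul ν s)).fun_add
      ((hy s).fun_mul (hasDerivAt_sin_const_mul ν s))).congr_deriv (by ring)
  have hv : ∀ s, HasDerivAt (fun s => -x s * sin (ν * s) + y s * cos (ν * s)) 0 s := fun s =>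
    (((hx s).fun_neg.fun_mul (hasDerivAt_sin_const_mul ν s)).fun_add
      ((hy s).fun_mul (hasDerivAt_cos_const_mul ν s))).congr_deriv (by ring)
  constructor
  · simpa [sub_eq_zero] using sub_eq_mul_of_hasDerivAt_const hu t
  · simpa [sub_eq_zero] using sub_eq_mul_of_hasDerivAt_const hv t

lemma cos_mul_eq_one_of_rotation_returns (hx : ∀ t, HasDerivAt x (-ν * y t) t)
    (hy : ∀ t, HasDerivAt y (ν * x t) t) (h₀ : x 0 ^ 2 + y 0 ^ 2 ≠ 0) {T : ℝ}
    (hxT : x T = x 0) (hyT : y T = y 0) : cos (ν * T) = 1 := by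
  obtain ⟨hu, hv⟩ := rotate_back_eq_initial hx hy T
  rw [hxT, hyT] at hu hv
  have h : (x 0 ^ 2 + y 0 ^ 2) * (cos (ν * T) - 1) = 0 := by
    linear_combination x 0 * hu + y 0 * hv
  linarith [(mul_eq_zero.mp h).resolve_left h₀]

end Rotation

lemma pi_le_period_of_reeb_orbit {x y z θ : ℝ → ℝ}
    (hsph : ∀ t, x t ^ 2 + y t ^ 2 + z t ^ 2 = 1)
    (hx : ∀ t, HasDerivAt x (-2 * y t / (1 + z t ^ 2)) t)
    (hy : ∀ t, HasDerivAt y (2 * x t / (1 + z t ^ 2)) t) (hz : ∀ t, HasDerivAt z 0 t)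
    (hθ : ∀ t, HasDerivAt θ (2 * z t / (1 + z t ^ 2)) t) {T : ℝ} (hT : 0 < T)
    (hxT : x T = x 0) (hyT : y T = y 0) {k : ℤ} (hk : θ T - θ 0 = 2 * π * k) : π ≤ T := by
  set c := z 0
  have hzc : ∀ t, z t = c := fun t => by linarith [sub_eq_mul_of_hasDerivAt_const hz t]
  simp only [hzc] at hsph hx hy hθ
  have hden : 0 < 1 + c ^ 2 := by positivity
  have hθT : θ T - θ 0 = 2 * c / (1 + c ^ 2) * T := sub_eq_mul_of_hasDerivAt_const hθ T
  by_cases h₀ : x 0 ^ 2 + y 0 ^ 2 = 0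
  · have hc : c = 1 ∨ c = -1 := sq_eq_one_iff.mp (by linarith [hsph 0])
    rcases hc with hc | hc <;> rw [hc] at hθT <;> norm_num at hθT
    · linarith [two_pi_le_of_eq_two_pi_mul_int hT (k := k) (by linarith), pi_pos]
    · linarith [two_pi_le_of_eq_two_pi_mul_int hT (k := -k) (by push_cast; linarith), pi_pos]
  · have hrot := cos_mul_eq_one_of_rotation_returns (ν := 2 / (1 + c ^ 2))
      (fun t => (hx t).congr_deriv (by ring)) (fun t => (hy t).congr_deriv (by ring)) h₀ hxT hyT
    obtain ⟨n, hn⟩ := (cos_eq_one_iff _).mp hrot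
    have h2π := two_pi_le_of_eq_two_pi_mul_int (s := 2 / (1 + c ^ 2) * T) (k := n)
      (by positivity) (by linarith)
    rw [div_mul_eq_mul_div, le_div_iff₀ hden] at h2π
    nlinarith [pi_pos, sq_nonneg c]

/-- The lifted Reeb flow of the standard contact form on S² × S¹:
(1) every closed orbit has period at least π;
(2) for each θ₀ the curve t ↦ (cos 2t, sin 2t, 0, θ₀) is a solution closing up
with period exactly π. Hence the minimal period of closed orbits is π. -/
theorem reeb_orbits_on_S2xS1 :
    (∀ x y z θ : ℝ → ℝ,
      ContDiff ℝ ∞ x → ContDiff ℝ ∞ y → ContDiff ℝ ∞ z → ContDiff ℝ ∞ θ →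
      (∀ t, x t ^ 2 + y t ^ 2 + z t ^ 2 = 1) →
      (∀ t, HasDerivAt x (-2 * y t / (1 + z t ^ 2)) t) →
      (∀ t, HasDerivAt y (2 * x t / (1 + z t ^ 2)) t) →
      (∀ t, HasDerivAt z 0 t) →
      (∀ t, HasDerivAt θ (2 * z t / (1 + z t ^ 2)) t) →
      ∀ T : ℝ, 0 < T →
        x T = x 0 → y T = y 0 → z T = z 0 →
        (∃ k : ℤ, θ T - θ 0 = 2 * Real.pi * k) →
        Real.pi ≤ T) ∧
    (∀ θ₀ : ℝ, ∃ x y z θ : ℝ → ℝ,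
      (∀ t, x t = Real.cos (2 * t)) ∧ (∀ t, y t = Real.sin (2 * t)) ∧
      (∀ t, z t = 0) ∧ (∀ t, θ t = θ₀) ∧
      (∀ t, x t ^ 2 + y t ^ 2 + z t ^ 2 = 1) ∧
      (∀ t, HasDerivAt x (-2 * y t / (1 + z t ^ 2)) t) ∧
      (∀ t, HasDerivAt y (2 * x t / (1 + z t ^ 2)) t) ∧
      (∀ t, HasDerivAt z 0 t) ∧
      (∀ t, HasDerivAt θ (2 * z t / (1 + z t ^ 2)) t) ∧
      (∀ t, x (t + Real.pi) = x t ∧ y (t + Real.pi) = y t ∧ z (t + Real.pi) = z t) ∧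
      (∃ k : ℤ, θ Real.pi - θ 0 = 2 * Real.pi * k)) := by
  refine ⟨fun x y z θ _ _ _ _ hsph hx hy hz hθ T hT hxT hyT _ ⟨k, hk⟩ =>
    pi_le_period_of_reeb_orbit hsph hx hy hz hθ hT hxT hyT hk, fun θ₀ => ?_⟩
  refine ⟨fun t => cos (2 * t), fun t => sin (2 * t), fun _ => 0, fun _ => θ₀,
    fun _ => rfl, fun _ => rfl, fun _ => rfl, fun _ => rfl, fun t => ?_, fun t => ?_, fun t => ?_,
    fun t => hasDerivAt_const t 0, fun t => ?_, fun t => ?_, ⟨0, by simp⟩⟩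
  · simp
  · simpa using hasDerivAt_cos_const_mul 2 t
  · simpa using hasDerivAt_sin_const_mul 2 t
  · simp [hasDerivAt_const]
  · simp [mul_add, cos_add_two_pi, sin_add_two_pi]
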